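/- arXiv:2512.11598 — 3 statements merged into one kernel-verified Lean document; each statement's English description precedes it below -/
import Mathlib

section
/- Let ω : ℝ → ℝ³ be differentiable, let W(t) denote the 3×3 cross-product matrix of ω(t) (so W(t)x = ω(t) × x for all x ∈ ℝ³), let R : ℝ → Matrix (3×3, ℝ) be differentiable with R'(t) = W(t) R(t), let I_b be a fixed 3×3 real matrix, and set I(t) := R(t) I_b R(t)ᵀ. Then the angular momentum L(t) = I(t) ω(t) satisfies Euler's equation: L'(t) = I(t) ω'(t) + ω(t) × (I(t) ω(t)). -/
open Matrix

attribute [local instance] Matrix.normedAddCommGroup Matrix.normedSpace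

/-- Euler's equation: with `I(t) = R(t) I_b R(t)ᵀ` and `R'(t) = W(t) R(t)`, `W(t)` being
the cross-product matrix of the angular velocity `ω(t)`, the angular momentum
`L(t) = I(t) ω(t)` satisfies `L'(t) = I(t) ω'(t) + ω(t) × (I(t) ω(t))`. -/
theorem euler_equation (ω ω' : ℝ → Fin 3 → ℝ)
    (hω : ∀ t, HasDerivAt ω (ω' t) t)
    (W : ℝ → Matrix (Fin 3) (Fin 3) ℝ)
    (hW : ∀ t (x : Fin 3 → ℝ), W t *ᵥ x = crossProduct (ω t) x)
    (R : ℝ → Matrix (Fin 3) (Fin 3) ℝ)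
    (hR : ∀ t, HasDerivAt R (W t * R t) t)
    (Ib : Matrix (Fin 3) (Fin 3) ℝ) (t : ℝ) :
    HasDerivAt (fun s => (R s * Ib * (R s)ᵀ) *ᵥ ω s)
      ((R t * Ib * (R t)ᵀ) *ᵥ ω' t
        + crossProduct (ω t) ((R t * Ib * (R t)ᵀ) *ᵥ ω t)) t := by
  have hRij : ∀ i j, HasDerivAt (fun s => R s i j) ((W t * R t) i j) t :=
    fun i j => hasDerivAt_pi.mp (hasDerivAt_pi.mp (hR t) i) j
  have hωi : ∀ i, HasDerivAt (fun s => ω s i) (ω' t i) t :=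
    fun i => hasDerivAt_pi.mp (hω t) i
  -- Wᵀ ω = 0
  have hWTω : (W t)ᵀ *ᵥ ω t = 0 := by
    funext i
    have hcol : ∀ j, W t j i = crossProduct (ω t) (Pi.single i 1) j := by
      intro j
      have := congrFun (hW t (Pi.single i 1)) j
      simpa [Matrix.mulVec_single] using this
    have hperp : ω t ⬝ᵥ crossProduct (ω t) (Pi.single i 1) = 0 :=
      dot_self_cross (ω t) (Pi.single i 1)
    simp only [Matrix.mulVec, dotProduct, Matrix.transpose_apply, Pi.zero_apply]
    rw [show (∑ j, W t j i * ω t j) = ∑ j, ω t j * crossProduct (ω t) (Pi.single i 1) j by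
      refine Finset.sum_congr rfl fun j _ => ?_; rw [hcol j, mul_comm]]
    exact hperp
  have h1 : ∀ i k, HasDerivAt (fun s => (R s * Ib) i k) ((W t * R t * Ib) i k) t := by
    intro i k
    have := HasDerivAt.fun_sum (fun j (_ : j ∈ Finset.univ) => (hRij i j).mul_const (Ib j k))
    simpa [Matrix.mul_apply] using this
  have h2 : ∀ i l, HasDerivAt (fun s => (R s * Ib * (R s)ᵀ) i l)
      ((W t * R t * Ib * (R t)ᵀ + R t * Ib * (W t * R t)ᵀ) i l) t := by
    intro i l
    have := HasDerivAt.fun_sum (fun k (_ : k ∈ Finset.univ) => (h1 i k).fun_mul (hRij l k))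
    have h := this
    simp only [Matrix.mul_apply, Matrix.transpose_apply, Matrix.add_apply,
      Finset.sum_add_distrib] at h ⊢
    convert h using 2
  have h3 : HasDerivAt (fun s => (R s * Ib * (R s)ᵀ) *ᵥ ω s)
      ((W t * R t * Ib * (R t)ᵀ + R t * Ib * (W t * R t)ᵀ) *ᵥ ω t
        + (R t * Ib * (R t)ᵀ) *ᵥ ω' t) t := by
    refine hasDerivAt_pi.mpr fun i => ?_
    have := HasDerivAt.fun_sum (fun l (_ : l ∈ Finset.univ) => (h2 i l).mul (hωi l))
    simpa [Matrix.mulVec, dotProduct, Finset.sum_add_distrib] using this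
  convert h3 using 1
  rw [Matrix.add_mulVec, Matrix.transpose_mul]
  have e1 : (W t * R t * Ib * (R t)ᵀ) *ᵥ ω t
      = crossProduct (ω t) ((R t * Ib * (R t)ᵀ) *ᵥ ω t) := by
    rw [show W t * R t * Ib * (R t)ᵀ = W t * (R t * Ib * (R t)ᵀ) by simp [Matrix.mul_assoc],
      ← Matrix.mulVec_mulVec, hW]
  have e2 : (R t * Ib * ((R t)ᵀ * (W t)ᵀ)) *ᵥ ω t = 0 := by
    rw [show R t * Ib * ((R t)ᵀ * (W t)ᵀ) = R t * Ib * (R t)ᵀ * (W t)ᵀ by simp [Matrix.mul_assoc],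
      ← Matrix.mulVec_mulVec, hWTω, Matrix.mulVec_zero]
  rw [e1, e2, add_zero, add_comm]
end

section
/- Let a ∈ ℝ be nonzero, let J be a nonempty finite index set, and for each j ∈ J let w_j > 0 and Δx_j ∈ ℝ satisfy the upwind condition a · Δx_j < 0. Set S₁ = Σ_{j∈J} w_j Δx_j and S₂ = Σ_{j∈J} w_j Δx_j². Given values g_i ∈ ℝ and g_j ∈ ℝ (j ∈ J), define the first-order meshless upwind update g⁺ = g_i − Δt · a · (Σ_{j∈J} w_j Δx_j (g_j − g_i)) / S₂. If 0 ≤ Δt ≤ S₂ / |a · S₁|, then g⁺ satisfies the discrete maximum principle: min(g_i, min_{j∈J} g_j) ≤ g⁺ ≤ max(g_i, max_{j∈J} g_j). In particular the scheme is L^∞-stable under this generalized CFL condition. -/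
open Finset

/-!
Writing `d_j = -Δt a w_j Δx_j / S₂`, the update is `g_i + Σ_j d_j (g_j - g_i)`. The upwind
condition makes every `d_j` nonnegative, and the CFL condition is exactly `Σ_j d_j ≤ 1`, so the
update is a convex combination of `g_i` and the `g_j`.
-/

section ConvexUpdate

variable {ι R : Type*} [CommRing R] [LinearOrder R] [IsStrictOrderedRing R]
  {J : Finset ι} {d g : ι → R} {x m : R}

theorem le_add_sum_mul_sub (hd : ∀ j ∈ J, 0 ≤ d j) (hsum : ∑ j ∈ J, d j ≤ 1)
    (hx : m ≤ x) (hg : ∀ j ∈ J, m ≤ g j) : m ≤ x + ∑ j ∈ J, d j * (g j - x) := by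
  have hsplit : x + ∑ j ∈ J, d j * (g j - x) - m =
      (1 - ∑ j ∈ J, d j) * (x - m) + ∑ j ∈ J, d j * (g j - m) := by
    simp only [mul_sub, sum_sub_distrib, ← sum_mul]
    ring
  have hrest : 0 ≤ ∑ j ∈ J, d j * (g j - m) :=
    sum_nonneg fun j hj => mul_nonneg (hd j hj) (sub_nonneg.2 (hg j hj))
  nlinarith [mul_nonneg (sub_nonneg.2 hsum) (sub_nonneg.2 hx)]

theorem add_sum_mul_sub_le (hd : ∀ j ∈ J, 0 ≤ d j) (hsum : ∑ j ∈ J, d j ≤ 1)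
    (hx : x ≤ m) (hg : ∀ j ∈ J, g j ≤ m) : x + ∑ j ∈ J, d j * (g j - x) ≤ m := by
  have := le_add_sum_mul_sub (g := fun j => -g j) hd hsum (neg_le_neg hx)
    fun j hj => neg_le_neg (hg j hj)
  have hneg : -x + ∑ j ∈ J, d j * (-g j - -x) = -(x + ∑ j ∈ J, d j * (g j - x)) := by
    simp only [neg_add, ← sum_neg_distrib]
    congr 1
    exact sum_congr rfl fun j _ => by ring
  linarith

end ConvexUpdate

section Upwind

variable {ι : Type*} {J : Finset ι} {w Δx : ι → ℝ} {a Δt : ℝ}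

noncomputable def upwindCoeff (a Δt : ℝ) (J : Finset ι) (w Δx : ι → ℝ) (j : ι) : ℝ :=
  -(Δt * a * (w j * Δx j)) / ∑ k ∈ J, w k * Δx k ^ 2

theorem upwind_update_eq (g : ι → ℝ) (gi : ℝ) :
    gi - Δt * a * (∑ j ∈ J, w j * Δx j * (g j - gi)) / (∑ j ∈ J, w j * Δx j ^ 2) =
      gi + ∑ j ∈ J, upwindCoeff a Δt J w Δx j * (g j - gi) := by
  simp only [upwindCoeff, div_mul_eq_mul_div, ← sum_div, neg_mul, sum_neg_distrib, mul_sum]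
  ring_nf

theorem sum_mul_sq_pos_of_upwind (hJ : J.Nonempty) (hw : ∀ j ∈ J, 0 < w j)
    (hup : ∀ j ∈ J, a * Δx j < 0) : 0 < ∑ j ∈ J, w j * Δx j ^ 2 :=
  sum_pos (fun j hj => mul_pos (hw j hj)
    (pow_two_pos_of_ne_zero (right_ne_zero_of_mul (hup j hj).ne))) hJ

theorem mul_sum_mul_neg_of_upwind (hJ : J.Nonempty) (hw : ∀ j ∈ J, 0 < w j)
    (hup : ∀ j ∈ J, a * Δx j < 0) : a * ∑ j ∈ J, w j * Δx j < 0 := by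
  rw [mul_sum]
  exact sum_neg (fun j hj => by
    rw [mul_left_comm]
    exact mul_neg_of_pos_of_neg (hw j hj) (hup j hj)) hJ

theorem upwindCoeff_nonneg (hΔt0 : 0 ≤ Δt) (hw : ∀ j ∈ J, 0 < w j)
    (hup : ∀ j ∈ J, a * Δx j < 0) {j : ι} (hj : j ∈ J) : 0 ≤ upwindCoeff a Δt J w Δx j := by
  have hflux : w j * (a * Δx j) ≤ 0 := (mul_neg_of_pos_of_neg (hw j hj) (hup j hj)).le
  refine div_nonneg ?_ (sum_nonneg fun k hk => mul_nonneg (hw k hk).le (sq_nonneg _))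
  nlinarith

theorem sum_upwindCoeff_le_one (hJ : J.Nonempty) (hw : ∀ j ∈ J, 0 < w j)
    (hup : ∀ j ∈ J, a * Δx j < 0)
    (hΔt : Δt ≤ (∑ j ∈ J, w j * Δx j ^ 2) / |a * ∑ j ∈ J, w j * Δx j|) :
    ∑ j ∈ J, upwindCoeff a Δt J w Δx j ≤ 1 := by
  have hS₂ := sum_mul_sq_pos_of_upwind hJ hw hup
  have haS₁ := mul_sum_mul_neg_of_upwind hJ hw hup
  rw [abs_of_neg haS₁, le_div_iff₀ (neg_pos.2 haS₁)] at hΔt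
  have hsum : ∑ j ∈ J, upwindCoeff a Δt J w Δx j =
      -(Δt * (a * ∑ j ∈ J, w j * Δx j)) / ∑ j ∈ J, w j * Δx j ^ 2 := by
    simp only [upwindCoeff, ← sum_div, sum_neg_distrib, mul_sum, mul_assoc]
  rw [hsum, div_le_one hS₂]
  linarith

end Upwind

theorem meshless_upwind_dmp_general {ι : Type*} (a : ℝ)
    (J : Finset ι) (hJ : J.Nonempty) (w Δx g : ι → ℝ)
    (hw : ∀ j ∈ J, 0 < w j) (hup : ∀ j ∈ J, a * Δx j < 0)
    (gi Δt : ℝ) (hΔt0 : 0 ≤ Δt)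
    (hΔt : Δt ≤ (∑ j ∈ J, w j * Δx j ^ 2) / |a * ∑ j ∈ J, w j * Δx j|) :
    min gi (J.inf' hJ g) ≤
      gi - Δt * a * (∑ j ∈ J, w j * Δx j * (g j - gi)) / (∑ j ∈ J, w j * Δx j ^ 2) ∧
    gi - Δt * a * (∑ j ∈ J, w j * Δx j * (g j - gi)) / (∑ j ∈ J, w j * Δx j ^ 2) ≤
      max gi (J.sup' hJ g) := by
  have hd := fun j (hj : j ∈ J) => upwindCoeff_nonneg hΔt0 hw hup hj
  have hsum := sum_upwindCoeff_le_one hJ hw hup hΔt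
  rw [upwind_update_eq]
  exact ⟨le_add_sum_mul_sub hd hsum (min_le_left _ _)
      fun j hj => (min_le_right _ _).trans (inf'_le g hj),
    add_sum_mul_sub_le hd hsum (le_max_left _ _)
      fun j hj => (le_sup' g hj).trans (le_max_right _ _)⟩

/-- The first-order meshless upwind scheme satisfies the discrete maximum principle
(hence is `L^∞`-stable) under the generalized CFL condition
`Δt ≤ S₂ / |a S₁|` with `S₁ = Σ w_j Δx_j` and `S₂ = Σ w_j Δx_j²`. -/
theorem meshless_upwind_dmp {ι : Type*} (a : ℝ) (ha : a ≠ 0)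
    (J : Finset ι) (hJ : J.Nonempty) (w Δx g : ι → ℝ)
    (hw : ∀ j ∈ J, 0 < w j) (hup : ∀ j ∈ J, a * Δx j < 0)
    (gi Δt : ℝ) (hΔt0 : 0 ≤ Δt)
    (hΔt : Δt ≤ (∑ j ∈ J, w j * Δx j ^ 2) / |a * ∑ j ∈ J, w j * Δx j|) :
    min gi (J.inf' hJ g) ≤
      gi - Δt * a * (∑ j ∈ J, w j * Δx j * (g j - gi)) / (∑ j ∈ J, w j * Δx j ^ 2) ∧
    gi - Δt * a * (∑ j ∈ J, w j * Δx j * (g j - gi)) / (∑ j ∈ J, w j * Δx j ^ 2) ≤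
      max gi (J.sup' hJ g) :=
  meshless_upwind_dmp_general a J hJ w Δx g hw hup gi Δt hΔt0 hΔt
end

section
/- Let a ∈ ℝ² be a transport vector, let J be a nonempty finite index set, and for each j ∈ J let η_j, s_j ∈ ℝ² be vectors, κ̄_j ≥ 0 and λ̄_j ∈ ℝ. Define c_j = −[ κ̄_j (a·η_j − |a·η_j|) + (λ̄_j (a·s_j) − |λ̄_j (a·s_j)|) ]. Then c_j ≥ 0 for every j ∈ J, and if Δt ≥ 0 satisfies Δt · Σ_{j∈J} c_j ≤ 1, then the update g⁺ = g_i + Δt Σ_{j∈J} c_j (g_j − g_i) satisfies the discrete maximum principle min(g_i, min_{j∈J} g_j) ≤ g⁺ ≤ max(g_i, max_{j∈J} g_j); in particular the first-order two-dimensional scheme is L^∞-stable provided Δt ≤ 1 / Σ_{j∈J} c_j. -/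
open Finset
open scoped RealInnerProductSpace

/-!
Each coefficient has the form `-(κ (x - |x|) + (y - |y|))` with `κ ≥ 0`, and `t - |t| ≤ 0`,
so it is nonnegative. The update is then `(1 - Δt Σ c_j) g_i + Σ (Δt c_j) g_j`, a convex
combination of `g_i` and the `g_j` once `Δt Σ c_j ≤ 1`, and so lies between their minimum
and maximum.
-/

lemma neg_mul_sub_abs_add_sub_abs_nonneg {κ : ℝ} (hκ : 0 ≤ κ) (x y : ℝ) :
    0 ≤ -(κ * (x - |x|) + (y - |y|)) := by
  have hx : κ * (x - |x|) ≤ 0 :=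
    mul_nonpos_of_nonneg_of_nonpos hκ (sub_nonpos.mpr (le_abs_self x))
  have hy : y - |y| ≤ 0 := sub_nonpos.mpr (le_abs_self y)
  linarith

section EulerUpdate

variable {ι 𝕜 : Type*} [Field 𝕜] [LinearOrder 𝕜] [IsStrictOrderedRing 𝕜]
  {J : Finset ι} {c g : ι → 𝕜} {gi Δt m : 𝕜}

lemma le_add_mul_sum_mul_sub (hc : ∀ j ∈ J, 0 ≤ c j) (hΔt : 0 ≤ Δt)
    (hCFL : Δt * ∑ j ∈ J, c j ≤ 1) (hmi : m ≤ gi) (hmg : ∀ j ∈ J, m ≤ g j) :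
    m ≤ gi + Δt * ∑ j ∈ J, c j * (g j - gi) := by
  have hsum : (∑ j ∈ J, c j) * (m - gi) ≤ ∑ j ∈ J, c j * (g j - gi) := by
    rw [sum_mul]
    exact sum_le_sum fun j hj => mul_le_mul_of_nonneg_left (by linarith [hmg j hj]) (hc j hj)
  calc m = gi + 1 * (m - gi) := by ring
    _ ≤ gi + (Δt * ∑ j ∈ J, c j) * (m - gi) :=
        add_le_add_right (mul_le_mul_of_nonpos_right hCFL (sub_nonpos.mpr hmi)) gi
    _ = gi + Δt * ((∑ j ∈ J, c j) * (m - gi)) := by ring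
    _ ≤ gi + Δt * ∑ j ∈ J, c j * (g j - gi) :=
        add_le_add_right (mul_le_mul_of_nonneg_left hsum hΔt) gi

lemma add_mul_sum_mul_sub_le (hc : ∀ j ∈ J, 0 ≤ c j) (hΔt : 0 ≤ Δt)
    (hCFL : Δt * ∑ j ∈ J, c j ≤ 1) (hMi : gi ≤ m) (hMg : ∀ j ∈ J, g j ≤ m) :
    gi + Δt * ∑ j ∈ J, c j * (g j - gi) ≤ m := by
  have h := le_add_mul_sum_mul_sub (g := -g) (gi := -gi) (m := -m) hc hΔt hCFL
    (neg_le_neg hMi) fun j hj => neg_le_neg (hMg j hj)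
  have hneg : -gi + Δt * ∑ j ∈ J, c j * ((-g) j - -gi)
      = -(gi + Δt * ∑ j ∈ J, c j * (g j - gi)) := by
    simp only [Pi.neg_apply, neg_sub_neg, mul_sub, sum_sub_distrib]
    ring
  linarith

end EulerUpdate

/-- The first-order positive meshless scheme in two space dimensions: the coefficients
`c_j = −[κ̄_j (a·η_j − |a·η_j|) + (λ̄_j (a·s_j) − |λ̄_j (a·s_j)|)]` are nonnegative, and
under the time step restriction `Δt Σ c_j ≤ 1` the forward-Euler update satisfies the
discrete maximum principle, hence the scheme is `L^∞`-stable. -/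
theorem meshless_2d_first_order_dmp {ι : Type*} (J : Finset ι) (hJ : J.Nonempty)
    (a : EuclideanSpace ℝ (Fin 2)) (η s : ι → EuclideanSpace ℝ (Fin 2))
    (κ lam : ι → ℝ) (hκ : ∀ j ∈ J, 0 ≤ κ j)
    (c : ι → ℝ)
    (hc : ∀ j, c j =
      -(κ j * (⟪a, η j⟫ - |⟪a, η j⟫|) + (lam j * ⟪a, s j⟫ - |lam j * ⟪a, s j⟫|)))
    (gi Δt : ℝ) (g : ι → ℝ) (hΔt0 : 0 ≤ Δt) :
    (∀ j ∈ J, 0 ≤ c j) ∧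
    (Δt * ∑ j ∈ J, c j ≤ 1 →
      min gi (J.inf' hJ g) ≤ gi + Δt * ∑ j ∈ J, c j * (g j - gi) ∧
      gi + Δt * ∑ j ∈ J, c j * (g j - gi) ≤ max gi (J.sup' hJ g)) := by
  have hc_nonneg : ∀ j ∈ J, 0 ≤ c j := fun j hj =>
    (hc j).symm ▸ neg_mul_sub_abs_add_sub_abs_nonneg (hκ j hj) _ _
  refine ⟨hc_nonneg, fun hCFL => ⟨?_, ?_⟩⟩
  · exact le_add_mul_sum_mul_sub hc_nonneg hΔt0 hCFL (min_le_left _ _)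
      fun j hj => (min_le_right _ _).trans (inf'_le g hj)
  · exact add_mul_sum_mul_sub_le hc_nonneg hΔt0 hCFL (le_max_left _ _)
      fun j hj => (le_sup' g hj).trans (le_max_right _ _)
end
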